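/- Let n ≥ 1, c > 0, and let Θ : [0,∞) → [0,∞) be a decreasing function with Θ(t) ≥ c t^{−1/2} for all t ≥ 1. Then for each λ ≠ 0 there exist a constant C > 0 and an integer M such that for all m ≥ M: Σ_{k=0}^∞ ((2k+n)|λ|)^{2m+n−1} e^{−2Θ(((2k+n)|λ|)^{1/2}) ((2k+n)|λ|)^{1/2}} ≤ C (2m/Θ(m⁴))^{4m}. -/

import Mathlib

open MeasureTheory Filter
open scoped ENNReal

noncomputable section

lemma aux_pow_le_exp (j : ℕ) {t : ℝ} (ht : 0 ≤ t) : t ^ j ≤ j.factorial * Real.exp t := by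
  have h := Real.pow_div_factorial_le_exp t ht j
  have hj : (0:ℝ) < j.factorial := by positivity
  calc t ^ j = (j.factorial : ℝ) * (t ^ j / j.factorial) := by field_simp
    _ ≤ j.factorial * Real.exp t := by gcongr

lemma aux_sup (K : ℕ) {b x : ℝ} (hb : 0 < b) (hx : 0 ≤ x) :
    x ^ K * Real.exp (-(b * x)) ≤ ((K:ℝ) / b) ^ K * Real.exp (-(K:ℝ)) := by
  rcases Nat.eq_zero_or_pos K with hK | hK
  · subst hK
    simp only [pow_zero, one_mul, Nat.cast_zero, neg_zero, Real.exp_zero]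
    exact Real.exp_le_one_iff.mpr (by nlinarith)
  rcases eq_or_lt_of_le hx with hx0 | hx0
  · rw [← hx0]
    have : (0:ℝ) ^ K = 0 := zero_pow (by omega)
    rw [this, zero_mul]
    positivity
  · have hKR : (0:ℝ) < K := by exact_mod_cast hK
    set t : ℝ := b * x / K with htdef
    have htpos : 0 < t := by positivity
    have h2 : t ≤ Real.exp (t - 1) := by
      have := Real.add_one_le_exp (t - 1); linarith
    have h1 : t * Real.exp (1 - t) ≤ 1 := by
      calc t * Real.exp (1 - t) ≤ Real.exp (t - 1) * Real.exp (1 - t) := by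
            gcongr
        _ = 1 := by rw [← Real.exp_add]; norm_num
    have hxe : x = ((K:ℝ)/b) * t := by
      rw [htdef]; field_simp
    have hbx : b * x = (K:ℝ) * t := by
      rw [htdef, mul_comm ((K:ℝ)) _, div_mul_cancel₀ _ (ne_of_gt hKR)]
    have e1 : (t * Real.exp (1 - t)) ^ K = t ^ K * Real.exp ((K:ℝ) * (1 - t)) := by
      rw [mul_pow, ← Real.exp_nat_mul]
    have key : x ^ K * Real.exp (-(b * x)) =
        (((K:ℝ)/b) ^ K * Real.exp (-(K:ℝ))) * (t * Real.exp (1 - t)) ^ K := by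
      rw [hbx, hxe, mul_pow, e1,
        show -((K:ℝ) * t) = -(K:ℝ) + (K:ℝ) * (1 - t) by ring, Real.exp_add]
      ring
    rw [key]
    have hp : (t * Real.exp (1 - t)) ^ K ≤ 1 :=
      pow_le_one₀ (by positivity) h1
    exact mul_le_of_le_one_right (by positivity) hp

lemma aux_invsq : Summable (fun k : ℕ => 1/((k:ℝ)+1)^2) ∧ (∑' k : ℕ, 1/((k:ℝ)+1)^2) ≤ 3 := by
  have hz := hasSum_zeta_two
  have hsum : Summable (fun n : ℕ => (1:ℝ)/(n:ℝ)^2) := hz.summable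
  have hval : ∑' k : ℕ, (1:ℝ)/(k:ℝ)^2 = Real.pi ^ 2 / 6 := hz.tsum_eq
  have hs : Summable (fun k : ℕ => 1/((k:ℝ)+1)^2) := by
    have h := (summable_nat_add_iff 1).mpr hsum
    simpa using h
  refine ⟨hs, ?_⟩
  have h0 : (Real.pi ^ 2 / 6 : ℝ) =
      (1:ℝ)/((0:ℕ):ℝ)^2 + ∑' k : ℕ, 1/(((k+1:ℕ)):ℝ)^2 := by
    rw [← hval]; exact Summable.tsum_eq_zero_add hsum
  have hshift : (∑' k : ℕ, 1/((k:ℝ)+1)^2) = ∑' k : ℕ, 1/(((k+1:ℕ)):ℝ)^2 := by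
    apply tsum_congr; intro k; push_cast; ring_nf
  have hpi : Real.pi ≤ 4 := Real.pi_le_four
  have hpos : 0 < Real.pi := Real.pi_pos
  simp only [Nat.cast_zero] at h0
  rw [hshift]
  nlinarith [h0]



lemma aux_sqrt4_le (k : ℕ) : Real.sqrt (Real.sqrt k) ≤ Real.sqrt k := by
  rcases Nat.eq_zero_or_pos k with h | h
  · subst h; simp
  · have hk : (1:ℝ) ≤ k := by exact_mod_cast h
    have h1 : Real.sqrt k ≤ k := by
      have := Real.sqrt_le_sqrt (show (k:ℝ) ≤ (k:ℝ)^2 by nlinarith)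
      rwa [Real.sqrt_sq (by positivity)] at this
    exact Real.sqrt_le_sqrt h1

lemma aux_sum_exp {δ : ℝ} (hδ : 0 < δ) (f : ℕ → ℝ)
    (hf : ∀ k : ℕ, δ * Real.sqrt (Real.sqrt k) ≤ f k) :
    Summable (fun k => Real.exp (-f k)) ∧
      (∑' k, Real.exp (-f k)) ≤ 1 + 120960/δ^8 := by
  have hinv := aux_invsq
  have key : ∀ k : ℕ, Real.exp (-f (k+1)) ≤ 40320/δ^8 * (1/((k:ℝ)+1)^2) := by
    intro k
    set r : ℝ := ((k+1 : ℕ) : ℝ) with hrdef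
    have hr1 : (1:ℝ) ≤ r := by rw [hrdef]; push_cast; linarith [Nat.cast_nonneg (α := ℝ) k]
    have hr0 : (0:ℝ) ≤ r := by linarith
    set u : ℝ := δ * Real.sqrt (Real.sqrt r) with hudef
    have hsp : 0 < Real.sqrt (Real.sqrt r) := by
      apply Real.sqrt_pos.mpr; apply Real.sqrt_pos.mpr; linarith
    have hu : 0 < u := by positivity
    have h8 : (Real.sqrt (Real.sqrt r))^8 = r^2 := by
      have e1 : (Real.sqrt (Real.sqrt r))^2 = Real.sqrt r := Real.sq_sqrt (Real.sqrt_nonneg _)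
      have e2 : (Real.sqrt r)^2 = r := Real.sq_sqrt hr0
      calc (Real.sqrt (Real.sqrt r))^8 = (((Real.sqrt (Real.sqrt r))^2)^2)^2 := by ring
        _ = r^2 := by rw [e1, e2]
    have hexp : u^8 ≤ 40320 * Real.exp u := by
      have := aux_pow_le_exp 8 hu.le
      have hf8 : ((Nat.factorial 8 : ℕ) : ℝ) = 40320 := by norm_num [Nat.factorial]
      rwa [hf8] at this
    have hstep : Real.exp (-u) ≤ 40320 / u^8 := by
      have hu8 : 0 < u^8 := by positivity
      rw [Real.exp_neg, inv_eq_one_div, div_le_div_iff₀ (Real.exp_pos u) hu8]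
      nlinarith [hexp, Real.exp_pos u]
    have hmono : Real.exp (-f (k+1)) ≤ Real.exp (-u) := by
      apply Real.exp_le_exp.mpr
      have := hf (k+1)
      rw [← hrdef] at this
      linarith
    have hval : 40320 / u^8 = 40320/δ^8 * (1/((k:ℝ)+1)^2) := by
      have : u^8 = δ^8 * r^2 := by rw [hudef, mul_pow, h8]
      rw [this, hrdef]
      push_cast
      have h1 : ((k:ℝ)+1)^2 > 0 := by positivity
      field_simp
    linarith [hmono.trans (hstep.trans_eq hval)]
  have hmaj : Summable (fun k : ℕ => 40320/δ^8 * (1/((k:ℝ)+1)^2)) := hinv.1.mul_left _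
  have hs1 : Summable (fun k : ℕ => Real.exp (-f (k+1))) :=
    Summable.of_nonneg_of_le (fun k => (Real.exp_pos _).le) key hmaj
  have hsA : Summable (fun k : ℕ => Real.exp (-f k)) := (summable_nat_add_iff 1).mp hs1
  refine ⟨hsA, ?_⟩
  rw [Summable.tsum_eq_zero_add hsA]
  have h0 : Real.exp (-f 0) ≤ 1 := by
    rw [show (1:ℝ) = Real.exp 0 from (Real.exp_zero).symm]
    apply Real.exp_le_exp.mpr
    have := hf 0
    simp only [Nat.cast_zero, Real.sqrt_zero, mul_zero] at this
    linarith
  have hshift : (∑' k : ℕ, Real.exp (-f (k+1))) ≤ 40320/δ^8 * 3 := by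
    calc (∑' k : ℕ, Real.exp (-f (k+1)))
        ≤ ∑' k : ℕ, 40320/δ^8 * (1/((k:ℝ)+1)^2) := Summable.tsum_le_tsum key hs1 hmaj
      _ = 40320/δ^8 * ∑' k : ℕ, 1/((k:ℝ)+1)^2 := tsum_mul_left
      _ ≤ 40320/δ^8 * 3 := by
          have h40 : (0:ℝ) ≤ 40320/δ^8 := by positivity
          exact mul_le_mul_of_nonneg_left hinv.2 h40
  have : 40320/δ^8 * 3 = 120960/δ^8 := by ring
  linarith

set_option maxHeartbeats 2000000 in
/-- **A key sum estimate.** Let `n ≥ 1`, `c > 0`, and `Θ : [0,∞) → [0,∞)` decreasing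
with `Θ(t) ≥ c t^{-1/2}` for `t ≥ 1`. Then for each `λ ≠ 0` there are `C > 0` and `M`
such that for all `m ≥ M`,
`∑_k ((2k+n)|λ|)^{2m+n-1} e^{-2Θ(((2k+n)|λ|)^{1/2})((2k+n)|λ|)^{1/2}} ≤ C (2m/Θ(m⁴))^{4m}`. -/
theorem sum_estimate (n : ℕ) (hn : 1 ≤ n) (c : ℝ) (hc : 0 < c) (Θ : ℝ → ℝ)
    (hΘnonneg : ∀ t, 0 ≤ t → 0 ≤ Θ t) (hΘdec : AntitoneOn Θ (Set.Ici 0))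
    (hΘlow : ∀ t : ℝ, 1 ≤ t → c * t ^ (-(1 : ℝ) / 2) ≤ Θ t) :
    ∀ lam : ℝ, lam ≠ 0 → ∃ C > (0 : ℝ), ∃ M : ℕ, ∀ m : ℕ, M ≤ m →
      (∑' k : ℕ, ENNReal.ofReal
          (((2 * k + n) * |lam|) ^ (2 * m + n - 1) *
            Real.exp (-2 * Θ (Real.sqrt ((2 * k + n) * |lam|)) *
              Real.sqrt ((2 * k + n) * |lam|)))) ≤
        ENNReal.ofReal (C * (2 * m / Θ ((m : ℝ) ^ 4)) ^ (4 * m)) := by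
  intro lam hlam
  have hA : (0:ℝ) < |lam| := abs_pos.mpr hlam
  set A : ℝ := |lam| with hAdef
  have hnR : (1:ℝ) ≤ (n:ℝ) := by exact_mod_cast hn
  have hθ1pos : 0 < Θ 1 := by
    have h := hΘlow 1 le_rfl
    rw [Real.one_rpow] at h
    linarith
  set δ2 : ℝ := c/2 * Real.sqrt (Real.sqrt (2*A)) with hδ2def
  have hδ2 : 0 < δ2 := by
    have h : 0 < Real.sqrt (Real.sqrt (2*A)) :=
      Real.sqrt_pos.mpr (Real.sqrt_pos.mpr (by linarith))
    positivity
  set S2 : ℝ := 1 + 120960/δ2^8 with hS2def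
  have hS2 : 0 < S2 := by positivity
  set P : ℝ := 1 + 120960/((2*A)^4 * c^8) with hPdef
  have hP : 0 < P := by positivity
  set γ : ℝ := 2*(2+(n:ℝ))/c with hγdef
  have hγ : 0 < γ := by positivity
  set CC : ℝ := Real.exp (2*(n:ℝ)) * γ^(2*(n-1)) * P + S2 with hCdef
  have hCC : 0 < CC := by positivity
  refine ⟨CC, hCC, ?_⟩
  obtain ⟨M2, hM2⟩ := exists_nat_ge (Θ 1)
  have hE3 : ∀ᶠ m : ℕ in Filter.atTop, ((m:ℝ))^(6*n+10) * ((2/Real.exp 1)^4)^m ≤ 1 := by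
    have he : (2:ℝ) < Real.exp 1 := by
      have := Real.exp_one_gt_d9; linarith
    have hr : ‖((2:ℝ)/Real.exp 1)^4‖ < 1 := by
      rw [Real.norm_eq_abs, abs_of_nonneg (by positivity)]
      refine pow_lt_one₀ (by positivity) ?_ (by norm_num)
      rw [div_lt_one (Real.exp_pos 1)]; exact he
    have hs := summable_pow_mul_geometric_of_norm_lt_one (6*n+10) hr
    have ht := hs.tendsto_atTop_zero
    exact (ht.eventually_lt_const one_pos).mono (fun m h => le_of_lt h)
  obtain ⟨M3, hM3⟩ := Filter.eventually_atTop.mp hE3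
  set κ : ℝ := 8*(2+(n:ℝ)) * Real.sqrt (4*(2+(n:ℝ))/c) with hκdef
  have hκ0 : 0 ≤ κ := by positivity
  obtain ⟨M4, hM4⟩ := exists_nat_ge ((2*κ/c)^2)
  refine ⟨max (max 1 M2) (max M3 M4), ?_⟩
  intro m hm
  rw [max_le_iff, max_le_iff, max_le_iff] at hm
  obtain ⟨⟨hm1, hm2⟩, hm3, hm4⟩ := hm
  have hm1R : (1:ℝ) ≤ (m:ℝ) := by exact_mod_cast hm1
  have hmpos : (0:ℝ) < m := by linarith
  set N : ℕ := 2*m + n - 1 with hNdef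
  have hNm : 2*m ≤ N := by omega
  have hNmr : 2*(m:ℝ) ≤ (N:ℝ) := by exact_mod_cast hNm
  have hNcast : (N:ℝ) + 1 = 2*(m:ℝ) + (n:ℝ) := by
    have h : N + 1 = 2*m + n := by omega
    exact_mod_cast congrArg (Nat.cast (R := ℝ)) h
  have hNb : (N:ℝ) ≤ (2+(n:ℝ))*(m:ℝ) := by nlinarith only [hNcast, hm1R, hnR]
  set θ : ℝ := Θ ((m:ℝ)^4) with hθdef
  have hm41 : (1:ℝ) ≤ (m:ℝ)^4 := one_le_pow₀ hm1R
  have hθlow2 : c/(m:ℝ)^2 ≤ θ := by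
    have h := hΘlow ((m:ℝ)^4) hm41
    have e : ((m:ℝ)^4) ^ (-(1:ℝ)/2) = ((m:ℝ)^2)⁻¹ := by
      rw [show (-(1:ℝ)/2) = -(1/2) by norm_num, Real.rpow_neg (by positivity),
        ← Real.sqrt_eq_rpow, show ((m:ℝ)^4) = ((m:ℝ)^2)^2 by ring,
        Real.sqrt_sq (by positivity)]
    rw [e] at h
    rwa [div_eq_mul_inv]
  have hθpos : 0 < θ := lt_of_lt_of_le (by positivity) hθlow2
  have hθup : θ ≤ Θ 1 :=
    hΘdec (Set.mem_Ici.mpr zero_le_one) (Set.mem_Ici.mpr (by positivity)) hm41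
  have hB1 : (1:ℝ) ≤ 2*(m:ℝ)/θ := by
    rw [one_le_div hθpos]
    have h2 : (M2:ℝ) ≤ m := by exact_mod_cast hm2
    linarith only [h2, hθup, hM2, hm1R]
  -- coefficients
  set c1 : ℝ := (((2*N : ℕ):ℝ)/θ)^(2*N) * Real.exp (-((2*N : ℕ):ℝ)) with hc1def
  set c2 : ℝ := (((4*N : ℕ):ℝ)/c)^(4*N) * Real.exp (-(c/2 * (m:ℝ)^2)) with hc2def
  have hc1nn : 0 ≤ c1 := by positivity
  have hc2nn : 0 ≤ c2 := by positivity
  -- pointwise bound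
  have key : ∀ k : ℕ,
      ((2 * (k:ℝ) + (n:ℝ)) * A) ^ N *
          Real.exp (-2 * Θ (Real.sqrt ((2 * (k:ℝ) + (n:ℝ)) * A)) *
            Real.sqrt ((2 * (k:ℝ) + (n:ℝ)) * A)) ≤
        c1 * Real.exp (-(θ * Real.sqrt ((2 * (k:ℝ) + (n:ℝ)) * A))) +
        c2 * Real.exp (-(c/2 * Real.sqrt (Real.sqrt ((2 * (k:ℝ) + (n:ℝ)) * A)))) := by
    intro k
    set X : ℝ := (2 * (k:ℝ) + (n:ℝ)) * A with hXdef
    have hk0 : (0:ℝ) ≤ (k:ℝ) := Nat.cast_nonneg k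
    have hX : 0 < X := by
      rw [hXdef]
      have h9 : (0:ℝ) < 2*(k:ℝ)+(n:ℝ) := by linarith only [hk0, hnR]
      exact mul_pos h9 hA
    set s : ℝ := Real.sqrt X with hsdef
    have hs : 0 < s := Real.sqrt_pos.mpr hX
    have hs2 : s^2 = X := Real.sq_sqrt hX.le
    have hΘs : 0 ≤ Θ s := hΘnonneg s hs.le
    by_cases hcase : s ≤ (m:ℝ)^4
    · have hΘge : θ ≤ Θ s :=
        hΘdec (Set.mem_Ici.mpr hs.le) (Set.mem_Ici.mpr (by positivity)) hcase
      have e1 : X^N = s^(2*N) := by rw [pow_mul, hs2]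
      have step1 : X^N * Real.exp (-2 * Θ s * s) ≤ X^N * Real.exp (-(θ*s) + -(θ*s)) := by
        apply mul_le_mul_of_nonneg_left _ (by positivity)
        apply Real.exp_le_exp.mpr
        linarith only [mul_le_mul_of_nonneg_right hΘge hs.le]
      have step2 : X^N * Real.exp (-(θ*s) + -(θ*s)) =
          (s^(2*N) * Real.exp (-(θ*s))) * Real.exp (-(θ*s)) := by
        rw [e1, Real.exp_add]; ring
      have step3 : (s^(2*N) * Real.exp (-(θ*s))) * Real.exp (-(θ*s)) ≤ c1 * Real.exp (-(θ*s)) := by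
        apply mul_le_mul_of_nonneg_right _ (Real.exp_pos _).le
        exact aux_sup (2*N) hθpos hs.le
      have nn : 0 ≤ c2 * Real.exp (-(c/2 * Real.sqrt s)) := by positivity
      have := (step1.trans_eq step2).trans step3
      linarith only [this, nn]
    · push_neg at hcase
      have hs1 : (1:ℝ) ≤ s := le_trans hm41 hcase.le
      set q : ℝ := Real.sqrt s with hqdef
      have hq : 0 < q := Real.sqrt_pos.mpr hs
      have hq2 : q^2 = s := Real.sq_sqrt hs.le
      have hqm : (m:ℝ)^2 ≤ q := by
        have h := Real.sqrt_le_sqrt hcase.le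
        rwa [show ((m:ℝ)^4) = ((m:ℝ)^2)^2 by ring, Real.sqrt_sq (by positivity)] at h
      have hΘc : c / q ≤ Θ s := by
        have h := hΘlow s hs1
        have e : s ^ (-(1:ℝ)/2) = q⁻¹ := by
          rw [show (-(1:ℝ)/2) = -(1/2) by norm_num, Real.rpow_neg hs.le, ← Real.sqrt_eq_rpow]
        rw [e] at h
        rwa [div_eq_mul_inv]
      have hexp : (2:ℝ)*c*q ≤ 2 * Θ s * s := by
        have h1 : (c/q) * s ≤ Θ s * s := mul_le_mul_of_nonneg_right hΘc hs.le
        have h2 : (c/q) * s = c * q := by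
          rw [← hq2]; field_simp
        linarith only [h1, h2]
      have hq4 : q^4 = X := by rw [show q^4 = (q^2)^2 from by ring, hq2, hs2]
      have e1 : X^N = q^(4*N) := by rw [← hq4, ← pow_mul]
      have step1 : X^N * Real.exp (-2 * Θ s * s) ≤
          X^N * Real.exp (-(c*q) + (-(c/2*q) + -(c/2*q))) := by
        apply mul_le_mul_of_nonneg_left _ (by positivity)
        apply Real.exp_le_exp.mpr
        linarith only [hexp]
      have step2 : X^N * Real.exp (-(c*q) + (-(c/2*q) + -(c/2*q))) =
          ((q^(4*N) * Real.exp (-(c*q))) * Real.exp (-(c/2*q))) * Real.exp (-(c/2*q)) := by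
        rw [e1, Real.exp_add, Real.exp_add]; ring
      have step3 : q^(4*N) * Real.exp (-(c*q)) ≤ (((4*N:ℕ):ℝ)/c)^(4*N) := by
        have h := aux_sup (4*N) hc hq.le
        have h2 : Real.exp (-((4*N:ℕ):ℝ)) ≤ 1 := by
          rw [Real.exp_le_one_iff]
          simp only [neg_nonpos]
          positivity
        calc q^(4*N) * Real.exp (-(c*q))
            ≤ (((4*N:ℕ):ℝ)/c)^(4*N) * Real.exp (-((4*N:ℕ):ℝ)) := aux_sup (4*N) hc hq.le
          _ ≤ (((4*N:ℕ):ℝ)/c)^(4*N) * 1 := by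
              apply mul_le_mul_of_nonneg_left h2 (by positivity)
          _ = (((4*N:ℕ):ℝ)/c)^(4*N) := mul_one _
      have step4 : Real.exp (-(c/2*q)) ≤ Real.exp (-(c/2*(m:ℝ)^2)) := by
        apply Real.exp_le_exp.mpr
        exact neg_le_neg (mul_le_mul_of_nonneg_left hqm (by positivity))
      have chain : X^N * Real.exp (-2 * Θ s * s) ≤ c2 * Real.exp (-(c/2*q)) := by
        calc X^N * Real.exp (-2 * Θ s * s)
            ≤ X^N * Real.exp (-(c*q) + (-(c/2*q) + -(c/2*q))) := step1
          _ = ((q^(4*N) * Real.exp (-(c*q))) * Real.exp (-(c/2*q))) * Real.exp (-(c/2*q)) := step2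
          _ ≤ ((((4*N:ℕ):ℝ)/c)^(4*N) * Real.exp (-(c/2*(m:ℝ)^2))) * Real.exp (-(c/2*q)) := by
              apply mul_le_mul _ le_rfl (Real.exp_pos _).le (by positivity)
              exact mul_le_mul step3 step4 (Real.exp_pos _).le (by positivity)
          _ = c2 * Real.exp (-(c/2*q)) := by rw [hc2def]
      have nn : 0 ≤ c1 * Real.exp (-(θ*s)) := by positivity
      linarith only [chain, nn]
  -- summability of the two pieces
  have hf1 : ∀ k : ℕ, (θ * Real.sqrt (2*A)) * Real.sqrt (Real.sqrt (k:ℝ)) ≤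
      θ * Real.sqrt ((2 * (k:ℝ) + (n:ℝ)) * A) := by
    intro k
    have hk0 : (0:ℝ) ≤ (k:ℝ) := Nat.cast_nonneg k
    have h1 : (2*A) * (k:ℝ) ≤ (2*(k:ℝ)+(n:ℝ))*A := by nlinarith only [mul_nonneg (by linarith only [hnR] : (0:ℝ) ≤ (n:ℝ)) hA.le]
    have h2 : Real.sqrt ((2*A)*(k:ℝ)) ≤ Real.sqrt ((2*(k:ℝ)+(n:ℝ))*A) := Real.sqrt_le_sqrt h1
    have h3 : Real.sqrt ((2*A)*(k:ℝ)) = Real.sqrt (2*A) * Real.sqrt (k:ℝ) :=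
      Real.sqrt_mul (by linarith) _
    have h4 : Real.sqrt (Real.sqrt (k:ℝ)) ≤ Real.sqrt (k:ℝ) := aux_sqrt4_le k
    calc θ * Real.sqrt (2*A) * Real.sqrt (Real.sqrt (k:ℝ))
        ≤ θ * Real.sqrt (2*A) * Real.sqrt (k:ℝ) := by
          apply mul_le_mul_of_nonneg_left h4 (by positivity)
      _ = θ * (Real.sqrt (2*A) * Real.sqrt (k:ℝ)) := by ring
      _ ≤ θ * Real.sqrt ((2*(k:ℝ)+(n:ℝ))*A) := by
          apply mul_le_mul_of_nonneg_left _ hθpos.le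
          rw [← h3]; exact h2
  have hf2 : ∀ k : ℕ, δ2 * Real.sqrt (Real.sqrt (k:ℝ)) ≤
      c/2 * Real.sqrt (Real.sqrt ((2 * (k:ℝ) + (n:ℝ)) * A)) := by
    intro k
    have hk0 : (0:ℝ) ≤ (k:ℝ) := Nat.cast_nonneg k
    have h1 : (2*A) * (k:ℝ) ≤ (2*(k:ℝ)+(n:ℝ))*A := by nlinarith only [mul_nonneg (by linarith only [hnR] : (0:ℝ) ≤ (n:ℝ)) hA.le]
    have h2 : Real.sqrt (Real.sqrt ((2*A)*(k:ℝ))) ≤ Real.sqrt (Real.sqrt ((2*(k:ℝ)+(n:ℝ))*A)) :=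
      Real.sqrt_le_sqrt (Real.sqrt_le_sqrt h1)
    have h3 : Real.sqrt (Real.sqrt ((2*A)*(k:ℝ))) =
        Real.sqrt (Real.sqrt (2*A)) * Real.sqrt (Real.sqrt (k:ℝ)) := by
      rw [Real.sqrt_mul (by linarith : (0:ℝ) ≤ 2*A), Real.sqrt_mul (Real.sqrt_nonneg _)]
    calc δ2 * Real.sqrt (Real.sqrt (k:ℝ))
        = c/2 * (Real.sqrt (Real.sqrt (2*A)) * Real.sqrt (Real.sqrt (k:ℝ))) := by
          rw [hδ2def]; ring
      _ = c/2 * Real.sqrt (Real.sqrt ((2*A)*(k:ℝ))) := by rw [h3]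
      _ ≤ c/2 * Real.sqrt (Real.sqrt ((2*(k:ℝ)+(n:ℝ))*A)) := by
          apply mul_le_mul_of_nonneg_left h2 (by positivity)
  have hδ1 : 0 < θ * Real.sqrt (2*A) := by
    have : 0 < Real.sqrt (2*A) := Real.sqrt_pos.mpr (by linarith)
    positivity
  have hsum1 := aux_sum_exp hδ1 (fun k => θ * Real.sqrt ((2 * (k:ℝ) + (n:ℝ)) * A)) hf1
  have hsum2 := aux_sum_exp hδ2 (fun k => c/2 * Real.sqrt (Real.sqrt ((2 * (k:ℝ) + (n:ℝ)) * A))) hf2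
  have hT1 : (∑' k : ℕ, Real.exp (-(θ * Real.sqrt ((2 * (k:ℝ) + (n:ℝ)) * A)))) ≤ P * (m:ℝ)^16 := by
    have h := hsum1.2
    have hsq : (0:ℝ) < Real.sqrt (2*A) := Real.sqrt_pos.mpr (by linarith)
    have e : (θ * Real.sqrt (2*A))^8 = θ^8 * (2*A)^4 := by
      have e2 : (Real.sqrt (2*A))^2 = 2*A := Real.sq_sqrt (by linarith)
      calc (θ * Real.sqrt (2*A))^8 = θ^8 * (((Real.sqrt (2*A))^2)^2)^2 := by ring
        _ = θ^8 * (2*A)^4 := by rw [e2]; ring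
    have hinv : 1/θ^8 ≤ (m:ℝ)^16/c^8 := by
      rw [div_le_div_iff₀ (by positivity) (by positivity)]
      have h8 : (c/(m:ℝ)^2)^8 ≤ θ^8 := pow_le_pow_left₀ (by positivity) hθlow2 8
      have e8 : (c/(m:ℝ)^2)^8 = c^8/(m:ℝ)^16 := by rw [div_pow]; ring_nf
      rw [e8] at h8
      have hm16 : (0:ℝ) < (m:ℝ)^16 := by positivity
      have h9 := (div_le_iff₀ hm16).mp h8
      linarith only [h9]
    have b1 : 120960/(θ * Real.sqrt (2*A))^8 = 120960/(2*A)^4 * (1/θ^8) := by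
      rw [e]; field_simp
    have b2 : 120960/(2*A)^4 * (1/θ^8) ≤ 120960/(2*A)^4 * ((m:ℝ)^16/c^8) :=
      mul_le_mul_of_nonneg_left hinv (by positivity)
    have b3 : 120960/(2*A)^4 * ((m:ℝ)^16/c^8) = (120960/((2*A)^4 * c^8)) * (m:ℝ)^16 := by
      field_simp
    have hm16 : (1:ℝ) ≤ (m:ℝ)^16 := one_le_pow₀ hm1R
    have hcoef : (0:ℝ) ≤ 120960/((2*A)^4 * c^8) := by positivity
    calc (∑' k : ℕ, Real.exp (-(θ * Real.sqrt ((2 * (k:ℝ) + (n:ℝ)) * A))))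
        ≤ 1 + 120960/(θ * Real.sqrt (2*A))^8 := h
      _ ≤ P * (m:ℝ)^16 := by rw [hPdef]; linarith only [b1, b2, b3, hm16, hcoef]
  have hT2 : (∑' k : ℕ, Real.exp (-(c/2 * Real.sqrt (Real.sqrt ((2 * (k:ℝ) + (n:ℝ)) * A))))) ≤ S2 :=
    hsum2.2
  have hc2le1 : c2 ≤ 1 := by
    set y : ℝ := ((4*N : ℕ):ℝ)/c with hydef
    have hy0 : (0:ℝ) ≤ y := by positivity
    have hsy : Real.sqrt y ≤ Real.exp (Real.sqrt y) := by
      linarith only [Real.add_one_le_exp (Real.sqrt y)]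
    have hyle : y ≤ Real.exp (2 * Real.sqrt y) := by
      have h2 : Real.sqrt y * Real.sqrt y = y := Real.mul_self_sqrt hy0
      calc y = Real.sqrt y * Real.sqrt y := h2.symm
        _ ≤ Real.exp (Real.sqrt y) * Real.exp (Real.sqrt y) :=
            mul_le_mul hsy hsy (Real.sqrt_nonneg _) (Real.exp_pos _).le
        _ = Real.exp (2 * Real.sqrt y) := by rw [← Real.exp_add]; ring_nf
    have hpow : y^(4*N) ≤ Real.exp (((4*N:ℕ):ℝ) * (2*Real.sqrt y)) := by
      calc y^(4*N) ≤ (Real.exp (2*Real.sqrt y))^(4*N) := pow_le_pow_left₀ hy0 hyle _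
        _ = Real.exp (((4*N:ℕ):ℝ) * (2*Real.sqrt y)) := (Real.exp_nat_mul _ _).symm
    have hN4 : ((4*N:ℕ):ℝ) ≤ 4*(2+(n:ℝ))*(m:ℝ) := by push_cast; linarith only [hNb]
    have hyb : y ≤ 4*(2+(n:ℝ))/c * (m:ℝ) := by
      rw [hydef]
      calc ((4*N:ℕ):ℝ)/c ≤ (4*(2+(n:ℝ))*(m:ℝ))/c := by gcongr
        _ = 4*(2+(n:ℝ))/c * (m:ℝ) := by ring
    have hsqy : Real.sqrt y ≤ Real.sqrt (4*(2+(n:ℝ))/c) * Real.sqrt (m:ℝ) := by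
      calc Real.sqrt y ≤ Real.sqrt (4*(2+(n:ℝ))/c * (m:ℝ)) := Real.sqrt_le_sqrt hyb
        _ = _ := Real.sqrt_mul (by positivity) _
    have hsm : 2*κ/c ≤ Real.sqrt (m:ℝ) := by
      have h4 : (M4:ℝ) ≤ m := by exact_mod_cast hm4
      have h1 : ((2*κ/c)^2) ≤ (m:ℝ) := by linarith only [hM4, h4]
      have h2 := Real.sqrt_le_sqrt h1
      rwa [Real.sqrt_sq (by positivity)] at h2
    have hmain : ((4*N:ℕ):ℝ) * (2*Real.sqrt y) ≤ c/2 * (m:ℝ)^2 := by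
      have hmsq : Real.sqrt (m:ℝ) * Real.sqrt (m:ℝ) = (m:ℝ) := Real.mul_self_sqrt (by positivity)
      have hsnn : (0:ℝ) ≤ Real.sqrt (m:ℝ) := Real.sqrt_nonneg _
      have h8 : ((4*N:ℕ):ℝ) * (2*Real.sqrt y) ≤
          (4*(2+(n:ℝ))*(m:ℝ)) * (2*(Real.sqrt (4*(2+(n:ℝ))/c) * Real.sqrt (m:ℝ))) := by
        apply mul_le_mul hN4 _ (by positivity) (by positivity)
        linarith only [hsqy]
      have hid : (4*(2+(n:ℝ))*(m:ℝ)) * (2*(Real.sqrt (4*(2+(n:ℝ))/c) * Real.sqrt (m:ℝ))) =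
          κ * ((m:ℝ) * Real.sqrt (m:ℝ)) := by
        rw [hκdef]; ring
      rw [hid] at h8
      have hsm2 : 2*κ ≤ c * Real.sqrt (m:ℝ) := by
        rw [div_le_iff₀ hc] at hsm; linarith only [hsm]
      have e9 : (c*Real.sqrt (m:ℝ)/2)*((m:ℝ)*Real.sqrt (m:ℝ)) =
          c/2*((m:ℝ)*(Real.sqrt (m:ℝ)*Real.sqrt (m:ℝ))) := by ring
      rw [hmsq] at e9
      have h10 : κ * ((m:ℝ) * Real.sqrt (m:ℝ)) ≤
          (c*Real.sqrt (m:ℝ)/2)*((m:ℝ)*Real.sqrt (m:ℝ)) := by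
        apply mul_le_mul_of_nonneg_right (by linarith only [hsm2]) (by positivity)
      rw [e9] at h10
      have e10 : c/2*((m:ℝ)*(m:ℝ)) = c/2*(m:ℝ)^2 := by ring
      rw [e10] at h10
      linarith only [h8, h10]
    calc c2 = y^(4*N) * Real.exp (-(c/2 * (m:ℝ)^2)) := hc2def
      _ ≤ Real.exp (((4*N:ℕ):ℝ)*(2*Real.sqrt y)) * Real.exp (-(c/2 * (m:ℝ)^2)) :=
          mul_le_mul_of_nonneg_right hpow (Real.exp_pos _).le
      _ ≤ Real.exp (c/2 * (m:ℝ)^2) * Real.exp (-(c/2 * (m:ℝ)^2)) :=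
          mul_le_mul_of_nonneg_right (Real.exp_le_exp.mpr hmain) (Real.exp_pos _).le
      _ = 1 := by rw [← Real.exp_add]; simp
  have hc1T1 : c1 * (∑' k : ℕ, Real.exp (-(θ * Real.sqrt ((2 * (k:ℝ) + (n:ℝ)) * A)))) ≤
      Real.exp (2*(n:ℝ)) * γ^(2*(n-1)) * P * (2*(m:ℝ)/θ)^(4*m) := by
    have hT1nn : 0 ≤ ∑' k : ℕ, Real.exp (-(θ * Real.sqrt ((2 * (k:ℝ) + (n:ℝ)) * A))) :=
      tsum_nonneg fun k => (Real.exp_pos _).le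
    set B : ℝ := 2*(m:ℝ)/θ with hBdef
    have hBnn : (0:ℝ) ≤ B := by positivity
    set D : ℝ := ((2*N:ℕ):ℝ)/θ with hDdef
    have hDnn : (0:ℝ) ≤ D := by positivity
    have hD : D ≤ B * (2 + (n:ℝ)/(m:ℝ)) := by
      have he : B * (2 + (n:ℝ)/(m:ℝ)) = (4*(m:ℝ) + 2*(n:ℝ))/θ := by
        rw [hBdef]; field_simp; ring
      rw [he, hDdef]
      gcongr
      push_cast
      linarith only [hNcast]
    have hsplitD : D^(2*N) = D^(4*m) * D^(2*(n-1)) := by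
      rw [← pow_add]; congr 1; omega
    have hq1 : D^(4*m) ≤ B^(4*m) * (2 + (n:ℝ)/(m:ℝ))^(4*m) := by
      rw [← mul_pow]; exact pow_le_pow_left₀ hDnn hD _
    have hq2 : (2 + (n:ℝ)/(m:ℝ))^(4*m) ≤ 2^(4*m) * Real.exp (2*(n:ℝ)) := by
      have h1 : 2 + (n:ℝ)/(m:ℝ) ≤ 2 * Real.exp ((n:ℝ)/(2*(m:ℝ))) := by
        have h2 := Real.add_one_le_exp ((n:ℝ)/(2*(m:ℝ)))
        have e : (n:ℝ)/(m:ℝ) = 2*((n:ℝ)/(2*(m:ℝ))) := by field_simp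
        rw [e]; linarith only [h2]
      calc (2 + (n:ℝ)/(m:ℝ))^(4*m) ≤ (2 * Real.exp ((n:ℝ)/(2*(m:ℝ))))^(4*m) :=
            pow_le_pow_left₀ (by positivity) h1 _
        _ = 2^(4*m) * Real.exp ((n:ℝ)/(2*(m:ℝ)))^(4*m) := mul_pow _ _ _
        _ = 2^(4*m) * Real.exp (((4*m:ℕ):ℝ) * ((n:ℝ)/(2*(m:ℝ)))) := by rw [← Real.exp_nat_mul]
        _ = 2^(4*m) * Real.exp (2*(n:ℝ)) := by
            congr 1
            congr 1
            push_cast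
            field_simp
            ring
    have hq3 : D^(2*(n-1)) ≤ (γ*(m:ℝ)^3)^(2*(n-1)) := by
      apply pow_le_pow_left₀ hDnn
      have hi : 1/θ ≤ (m:ℝ)^2/c := by
        rw [div_le_div_iff₀ hθpos hc]
        have h9 := (div_le_iff₀ (by positivity : (0:ℝ) < (m:ℝ)^2)).mp hθlow2
        linarith only [h9]
      calc D = ((2*N:ℕ):ℝ) * (1/θ) := by rw [hDdef]; ring
        _ ≤ ((2*N:ℕ):ℝ) * ((m:ℝ)^2/c) := by
            apply mul_le_mul_of_nonneg_left hi (by positivity)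
        _ ≤ (2*(2+(n:ℝ))*(m:ℝ)) * ((m:ℝ)^2/c) := by
            apply mul_le_mul_of_nonneg_right _ (by positivity)
            push_cast
            linarith only [hNb]
        _ = γ*(m:ℝ)^3 := by rw [hγdef]; field_simp
    have hEe : Real.exp (-((2*N:ℕ):ℝ)) ≤ Real.exp (-((4*m:ℕ):ℝ)) := by
      apply Real.exp_le_exp.mpr
      push_cast
      linarith only [hNmr]
    have hc1b : c1 ≤ B^(4*m) * (2 + (n:ℝ)/(m:ℝ))^(4*m) * (γ*(m:ℝ)^3)^(2*(n-1)) *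
        Real.exp (-((4*m:ℕ):ℝ)) := by
      calc c1 = D^(4*m) * D^(2*(n-1)) * Real.exp (-((2*N:ℕ):ℝ)) := by
            rw [hc1def, hsplitD]
        _ ≤ (B^(4*m) * (2 + (n:ℝ)/(m:ℝ))^(4*m)) * (γ*(m:ℝ)^3)^(2*(n-1)) *
            Real.exp (-((4*m:ℕ):ℝ)) := by
            apply mul_le_mul _ hEe (Real.exp_pos _).le (by positivity)
            exact mul_le_mul hq1 hq3 (by positivity) (by positivity)
        _ = B^(4*m) * (2 + (n:ℝ)/(m:ℝ))^(4*m) * (γ*(m:ℝ)^3)^(2*(n-1)) *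
            Real.exp (-((4*m:ℕ):ℝ)) := by ring
    have hgeom : (((2:ℝ)/Real.exp 1)^4) ^ m = (2:ℝ)^(4*m) * Real.exp (-((4*m:ℕ):ℝ)) := by
      rw [← pow_mul, div_pow, Real.exp_one_pow]
      rw [div_eq_mul_inv, ← Real.exp_neg]
    have hmpow : ((m:ℝ)^3)^(2*(n-1)) * (m:ℝ)^16 = (m:ℝ)^(6*n+10) := by
      rw [← pow_mul, ← pow_add]
      congr 1
      omega
    have hE3m : ((m:ℝ))^(6*n+10) * ((2/Real.exp 1)^4)^m ≤ 1 := hM3 m hm3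
    calc c1 * (∑' k : ℕ, Real.exp (-(θ * Real.sqrt ((2 * (k:ℝ) + (n:ℝ)) * A))))
        ≤ (B^(4*m) * (2 + (n:ℝ)/(m:ℝ))^(4*m) * (γ*(m:ℝ)^3)^(2*(n-1)) *
            Real.exp (-((4*m:ℕ):ℝ))) * (P * (m:ℝ)^16) :=
          mul_le_mul hc1b hT1 hT1nn (by positivity)
      _ ≤ (B^(4*m) * ((2:ℝ)^(4*m) * Real.exp (2*(n:ℝ))) * (γ*(m:ℝ)^3)^(2*(n-1)) *
            Real.exp (-((4*m:ℕ):ℝ))) * (P * (m:ℝ)^16) := by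
          gcongr
      _ = (Real.exp (2*(n:ℝ)) * γ^(2*(n-1)) * P * B^(4*m)) *
            (((m:ℝ))^(6*n+10) * ((2/Real.exp 1)^4)^m) := by
          rw [mul_pow γ ((m:ℝ)^3), ← hmpow, hgeom]
          ring
      _ ≤ (Real.exp (2*(n:ℝ)) * γ^(2*(n-1)) * P * B^(4*m)) * 1 := by
          apply mul_le_mul_of_nonneg_left hE3m (by positivity)
      _ = Real.exp (2*(n:ℝ)) * γ^(2*(n-1)) * P * B^(4*m) := mul_one _
  have hc2T2 : c2 * (∑' k : ℕ, Real.exp (-(c/2 * Real.sqrt (Real.sqrt ((2 * (k:ℝ) + (n:ℝ)) * A))))) ≤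
      S2 * (2*(m:ℝ)/θ)^(4*m) := by
    have hg2nn : 0 ≤ ∑' k : ℕ, Real.exp (-(c/2 * Real.sqrt (Real.sqrt ((2 * (k:ℝ) + (n:ℝ)) * A)))) :=
      tsum_nonneg (fun k => (Real.exp_pos _).le)
    have hBpow : (1:ℝ) ≤ (2*(m:ℝ)/θ)^(4*m) := one_le_pow₀ hB1
    calc c2 * (∑' k : ℕ, Real.exp (-(c/2 * Real.sqrt (Real.sqrt ((2 * (k:ℝ) + (n:ℝ)) * A)))))
        ≤ 1 * S2 := mul_le_mul hc2le1 hT2 hg2nn zero_le_one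
      _ = S2 := one_mul _
      _ ≤ S2 * (2*(m:ℝ)/θ)^(4*m) := le_mul_of_one_le_right hS2.le hBpow
  -- assemble
  have hU : Summable (fun k : ℕ => c1 * Real.exp (-(θ * Real.sqrt ((2 * (k:ℝ) + (n:ℝ)) * A))) +
      c2 * Real.exp (-(c/2 * Real.sqrt (Real.sqrt ((2 * (k:ℝ) + (n:ℝ)) * A))))) :=
    (hsum1.1.mul_left c1).add (hsum2.1.mul_left c2)
  have htsum : (∑' k : ℕ, (c1 * Real.exp (-(θ * Real.sqrt ((2 * (k:ℝ) + (n:ℝ)) * A))) +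
      c2 * Real.exp (-(c/2 * Real.sqrt (Real.sqrt ((2 * (k:ℝ) + (n:ℝ)) * A)))))) =
      c1 * (∑' k : ℕ, Real.exp (-(θ * Real.sqrt ((2 * (k:ℝ) + (n:ℝ)) * A)))) +
      c2 * (∑' k : ℕ, Real.exp (-(c/2 * Real.sqrt (Real.sqrt ((2 * (k:ℝ) + (n:ℝ)) * A))))) := by
    rw [Summable.tsum_add (hsum1.1.mul_left c1) (hsum2.1.mul_left c2), tsum_mul_left, tsum_mul_left]
  have hfinal : (∑' k : ℕ, (c1 * Real.exp (-(θ * Real.sqrt ((2 * (k:ℝ) + (n:ℝ)) * A))) +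
      c2 * Real.exp (-(c/2 * Real.sqrt (Real.sqrt ((2 * (k:ℝ) + (n:ℝ)) * A)))))) ≤
      CC * (2*(m:ℝ)/θ)^(4*m) := by
    rw [htsum, hCdef]
    calc c1 * (∑' k : ℕ, Real.exp (-(θ * Real.sqrt ((2 * (k:ℝ) + (n:ℝ)) * A)))) +
        c2 * (∑' k : ℕ, Real.exp (-(c/2 * Real.sqrt (Real.sqrt ((2 * (k:ℝ) + (n:ℝ)) * A))))) ≤
        Real.exp (2*(n:ℝ)) * γ^(2*(n-1)) * P * (2*(m:ℝ)/θ)^(4*m) + S2 * (2*(m:ℝ)/θ)^(4*m) :=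
          add_le_add hc1T1 hc2T2
      _ = (Real.exp (2*(n:ℝ)) * γ^(2*(n-1)) * P + S2) * (2*(m:ℝ)/θ)^(4*m) := by ring
  calc (∑' k : ℕ, ENNReal.ofReal
          (((2 * (k:ℝ) + (n:ℝ)) * A) ^ N *
            Real.exp (-2 * Θ (Real.sqrt ((2 * (k:ℝ) + (n:ℝ)) * A)) *
              Real.sqrt ((2 * (k:ℝ) + (n:ℝ)) * A))))
      ≤ ∑' k : ℕ, ENNReal.ofReal (c1 * Real.exp (-(θ * Real.sqrt ((2 * (k:ℝ) + (n:ℝ)) * A))) +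
          c2 * Real.exp (-(c/2 * Real.sqrt (Real.sqrt ((2 * (k:ℝ) + (n:ℝ)) * A))))) :=
        ENNReal.tsum_le_tsum (fun k => ENNReal.ofReal_le_ofReal (key k))
    _ = ENNReal.ofReal (∑' k : ℕ, (c1 * Real.exp (-(θ * Real.sqrt ((2 * (k:ℝ) + (n:ℝ)) * A))) +
          c2 * Real.exp (-(c/2 * Real.sqrt (Real.sqrt ((2 * (k:ℝ) + (n:ℝ)) * A)))))) :=
        (ENNReal.ofReal_tsum_of_nonneg (fun k => by positivity) hU).symm
    _ ≤ ENNReal.ofReal (CC * (2*(m:ℝ)/θ)^(4*m)) := ENNReal.ofReal_le_ofReal hfinal
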